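/- Let a ∈ W^{1,∞}(0,1) with a(x₀)=0 for some x₀ ∈ (0,1), a>0 on [0,1]\{x₀}, and (x−x₀)a'(x) ≤ K₁ a(x) a.e. with K₁ ∈ [1,2). Then 1/√a ∈ L¹(0,1) but 1/a ∉ L¹(0,1). -/

import Mathlib

open Set MeasureTheory

/-!
The degeneracy condition `(x - x₀) a' ≤ K₁ a` says exactly that `a(x) |x - x₀|^{-K₁}` is
nonincreasing to the right of `x₀` and nondecreasing to its left; since a Lipschitz function is
absolutely continuous, this monotonicity follows from the a.e. sign of the derivative. Comparing
with the endpoints gives `a ≥ c |x - x₀|^{K₁}` with `c > 0`, so `1/√a ≤ c^{-1/2} |x - x₀|^{-K₁/2}`,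
which is integrable because `K₁ < 2`. Conversely `a ≤ L |x - x₀|` because `a` is Lipschitz and
vanishes at `x₀`, so `1/a` dominates the non-integrable `1/(L |x - x₀|)`.
-/

theorem intervalIntegrable_abs_sub_rpow {r : ℝ} (hr : -1 < r) (c a b : ℝ) :
    IntervalIntegrable (fun x => |x - c| ^ r) volume a b := by
  have h_nonneg : ∀ b, 0 ≤ b → IntervalIntegrable (fun x : ℝ => |x| ^ r) volume 0 b :=
    fun b hb => (intervalIntegral.intervalIntegrable_rpow' hr).congr_uIoo fun x hx => by
      rw [uIoo_of_le hb] at hx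
      simp [abs_of_pos hx.1]
  have h : ∀ b, IntervalIntegrable (fun x : ℝ => |x| ^ r) volume 0 b := by
    intro b
    rcases le_total 0 b with hb | hb
    · exact h_nonneg b hb
    · simpa using (h_nonneg (-b) (by linarith)).comp_sub_left 0
  simpa using ((h (a - c)).symm.trans (h (b - c))).comp_sub_right c

namespace AbsolutelyContinuousOnInterval

variable {f f' : ℝ → ℝ} {u v : ℝ}

theorem monotoneOn_of_ae_hasDerivAt_nonneg (hf : AbsolutelyContinuousOnInterval f u v)
    (hf' : ∀ᵐ x ∂volume.restrict (Ioo u v), HasDerivAt f (f' x) x)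
    (hnonneg : ∀ᵐ x ∂volume.restrict (Ioo u v), 0 ≤ f' x) :
    MonotoneOn f (Icc u v) := by
  intro s hs t ht hst
  have hsub : Ioo s t ⊆ Ioo u v := Ioo_subset_Ioo hs.1 ht.2
  have hderiv : 0 ≤ᵐ[volume.restrict (Icc s t)] deriv f := by
    rw [Measure.restrict_congr_set Ioo_ae_eq_Icc.symm]
    filter_upwards [ae_restrict_of_ae_restrict_of_subset hsub hf',
      ae_restrict_of_ae_restrict_of_subset hsub hnonneg] with x hx hx'
    rwa [hx.deriv]
  have hf_st : AbsolutelyContinuousOnInterval f s t := hf.mono <| by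
    rw [uIcc_of_le hst, uIcc_of_le (hs.1.trans (hst.trans ht.2))]
    exact Icc_subset_Icc hs.1 ht.2
  have := intervalIntegral.integral_nonneg_of_ae_restrict hst hderiv
  rw [hf_st.integral_deriv_eq_sub] at this
  linarith

theorem antitoneOn_of_ae_hasDerivAt_nonpos (hf : AbsolutelyContinuousOnInterval f u v)
    (hf' : ∀ᵐ x ∂volume.restrict (Ioo u v), HasDerivAt f (f' x) x)
    (hnonpos : ∀ᵐ x ∂volume.restrict (Ioo u v), f' x ≤ 0) :
    AntitoneOn f (Icc u v) := fun _ hs _ ht hst =>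
  neg_le_neg_iff.1 <| hf.neg.monotoneOn_of_ae_hasDerivAt_nonneg (hf'.mono fun _ hx => hx.neg)
    (hnonpos.mono fun _ hx => neg_nonneg.2 hx) hs ht hst

end AbsolutelyContinuousOnInterval

section Degenerate

variable {a a' : ℝ → ℝ} {x₀ K u v : ℝ}

theorem monotoneOn_mul_rpow_neg_of_sub_mul_deriv_le (huv : u ≤ v) (hv : v < x₀)
    (ha : AbsolutelyContinuousOnInterval a u v)
    (ha' : ∀ᵐ t ∂volume.restrict (Ioo u v), HasDerivAt a (a' t) t)
    (hdeg : ∀ᵐ t ∂volume.restrict (Ioo u v), (t - x₀) * a' t ≤ K * a t) :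
    MonotoneOn (fun t => a t * (x₀ - t) ^ (-K)) (Icc u v) := by
  have hw : AbsolutelyContinuousOnInterval (fun t => (x₀ - t) ^ (-K)) u v := by
    refine ContDiffOn.absolutelyContinuousOnInterval <|
      ContDiffOn.rpow_const_of_ne (by fun_prop) fun t ht => ?_
    rw [uIcc_of_le huv] at ht
    linarith [ht.2]
  refine (ha.fun_mul hw).monotoneOn_of_ae_hasDerivAt_nonneg
    (f' := fun t => (x₀ - t) ^ (-K - 1) * ((x₀ - t) * a' t + K * a t)) ?_ ?_
  · filter_upwards [ha', ae_restrict_mem measurableSet_Ioo] with t ht htuv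
    have hpos : 0 < x₀ - t := by linarith [htuv.2]
    refine (ht.mul (((hasDerivAt_id t).const_sub x₀).rpow_const (p := -K)
      (Or.inl hpos.ne'))).congr_deriv ?_
    simp only [id, Real.rpow_sub_one hpos.ne']
    field_simp
  · filter_upwards [hdeg, ae_restrict_mem measurableSet_Ioo] with t ht htuv
    have hpos : 0 < x₀ - t := by linarith [htuv.2]
    exact mul_nonneg (by positivity) (by linarith)

theorem antitoneOn_mul_rpow_neg_of_sub_mul_deriv_le (huv : u ≤ v) (hu : x₀ < u)
    (ha : AbsolutelyContinuousOnInterval a u v)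
    (ha' : ∀ᵐ t ∂volume.restrict (Ioo u v), HasDerivAt a (a' t) t)
    (hdeg : ∀ᵐ t ∂volume.restrict (Ioo u v), (t - x₀) * a' t ≤ K * a t) :
    AntitoneOn (fun t => a t * (t - x₀) ^ (-K)) (Icc u v) := by
  have hw : AbsolutelyContinuousOnInterval (fun t => (t - x₀) ^ (-K)) u v := by
    refine ContDiffOn.absolutelyContinuousOnInterval <|
      ContDiffOn.rpow_const_of_ne (by fun_prop) fun t ht => ?_
    rw [uIcc_of_le huv] at ht
    linarith [ht.1]
  refine (ha.fun_mul hw).antitoneOn_of_ae_hasDerivAt_nonpos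
    (f' := fun t => (t - x₀) ^ (-K - 1) * ((t - x₀) * a' t - K * a t)) ?_ ?_
  · filter_upwards [ha', ae_restrict_mem measurableSet_Ioo] with t ht htuv
    have hpos : 0 < t - x₀ := by linarith [htuv.1]
    refine (ht.mul (((hasDerivAt_id t).sub_const x₀).rpow_const (p := -K)
      (Or.inl hpos.ne'))).congr_deriv ?_
    simp only [id, Real.rpow_sub_one hpos.ne']
    field_simp
    ring
  · filter_upwards [hdeg, ae_restrict_mem measurableSet_Ioo] with t ht htuv
    have hpos : 0 < t - x₀ := by linarith [htuv.1]
    exact mul_nonpos_of_nonneg_of_nonpos (by positivity) (by linarith)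

theorem exists_pos_mul_abs_sub_rpow_le (hx₀ : x₀ ∈ Ioo 0 1)
    (ha : AbsolutelyContinuousOnInterval a 0 1)
    (ha' : ∀ᵐ t ∂volume.restrict (Ioo 0 1), HasDerivAt a (a' t) t)
    (hdeg : ∀ᵐ t ∂volume.restrict (Ioo 0 1), (t - x₀) * a' t ≤ K * a t)
    (ha₀ : 0 < a 0) (ha₁ : 0 < a 1) :
    ∃ c > 0, ∀ t ∈ Icc 0 1, t ≠ x₀ → c * |t - x₀| ^ K ≤ a t := by
  obtain ⟨hx₀0, hx₀1⟩ := hx₀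
  refine ⟨min (a 0 * x₀ ^ (-K)) (a 1 * (1 - x₀) ^ (-K)),
    lt_min (by positivity) (mul_pos ha₁ (Real.rpow_pos_of_pos (by linarith) _)), ?_⟩
  intro t ht htx₀
  rcases htx₀.lt_or_gt with htx₀ | htx₀
  · have hpos : 0 < x₀ - t := by linarith
    have hmono := monotoneOn_mul_rpow_neg_of_sub_mul_deriv_le ht.1 htx₀
      (ha.mono (by simpa [uIcc_of_le, ht.1] using Icc_subset_Icc le_rfl ht.2))
      (ae_restrict_of_ae_restrict_of_subset (Ioo_subset_Ioo le_rfl ht.2) ha')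
      (ae_restrict_of_ae_restrict_of_subset (Ioo_subset_Ioo le_rfl ht.2) hdeg)
      (left_mem_Icc.2 ht.1) (right_mem_Icc.2 ht.1) ht.1
    simp only [sub_zero, Real.rpow_neg hpos.le] at hmono
    rw [abs_sub_comm, abs_of_pos hpos, ← le_div_iff₀ (by positivity), div_eq_mul_inv]
    exact (min_le_left _ _).trans hmono
  · have hpos : 0 < t - x₀ := by linarith
    have hanti := antitoneOn_mul_rpow_neg_of_sub_mul_deriv_le ht.2 htx₀
      (ha.mono (by simpa [uIcc_of_le, ht.2] using Icc_subset_Icc ht.1 le_rfl))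
      (ae_restrict_of_ae_restrict_of_subset (Ioo_subset_Ioo ht.1 le_rfl) ha')
      (ae_restrict_of_ae_restrict_of_subset (Ioo_subset_Ioo ht.1 le_rfl) hdeg)
      (left_mem_Icc.2 ht.2) (right_mem_Icc.2 ht.2) ht.2
    simp only [Real.rpow_neg hpos.le] at hanti
    rw [abs_of_pos hpos, ← le_div_iff₀ (by positivity), div_eq_mul_inv]
    exact (min_le_right _ _).trans hanti

end Degenerate

theorem integrableOn_one_div_sqrt_of_mul_abs_sub_rpow_le {f : ℝ → ℝ} {c K x₀ u v : ℝ}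
    (hc : 0 < c) (hK : K < 2) (hf : AEStronglyMeasurable f (volume.restrict (Ioo u v)))
    (hle : ∀ t ∈ Ioo u v, t ≠ x₀ → c * |t - x₀| ^ K ≤ f t) :
    IntegrableOn (fun t => 1 / √(f t)) (Ioo u v) := by
  have hdom : IntegrableOn (fun t => (√c)⁻¹ * |t - x₀| ^ (-(K / 2))) (Ioo u v) :=
    ((intervalIntegrable_abs_sub_rpow (by linarith) x₀ u v).1.mono_set
      Ioo_subset_Ioc_self).const_mul _
  refine hdom.mono' (hf.aemeasurable.sqrt.const_div 1).aestronglyMeasurable ?_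
  filter_upwards [ae_restrict_mem measurableSet_Ioo, Measure.ae_ne _ x₀] with t ht htx₀
  have hpos : 0 < |t - x₀| := abs_pos.2 (sub_ne_zero.2 htx₀)
  have hsqrt : √c * |t - x₀| ^ (K / 2) ≤ √(f t) :=
    calc √c * |t - x₀| ^ (K / 2) = √(c * |t - x₀| ^ K) := by
          rw [Real.sqrt_mul hc.le, Real.sqrt_eq_rpow (_ ^ K), ← Real.rpow_mul hpos.le]
          ring_nf
      _ ≤ √(f t) := Real.sqrt_le_sqrt (hle t ht htx₀)
  rw [Real.norm_of_nonneg (by positivity), Real.rpow_neg hpos.le, ← mul_inv, one_div]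
  exact inv_anti₀ (by positivity) hsqrt

theorem not_integrableOn_one_div_of_lipschitzOnWith {a : ℝ → ℝ} {L : NNReal} {x₀ v : ℝ}
    (hv : x₀ < v) (ha : LipschitzOnWith L a (Icc x₀ v)) (hzero : a x₀ = 0)
    (hne : ∀ t ∈ Ioo x₀ v, a t ≠ 0) :
    ¬ IntegrableOn (fun t => 1 / a t) (Ioo x₀ v) := by
  intro h
  have hinv : IntegrableOn (fun t => (t - x₀)⁻¹) (Ioo x₀ v) := by
    refine (h.norm.const_mul L).mono'
      (continuous_sub_right x₀).measurable.inv.aestronglyMeasurable ?_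
    filter_upwards [ae_restrict_mem measurableSet_Ioo] with t ht
    have hpos : 0 < t - x₀ := sub_pos.2 ht.1
    have hlip : |a t| ≤ L * (t - x₀) := by
      simpa [Real.dist_eq, hzero, abs_of_pos hpos] using
        ha.dist_le_mul t (Ioo_subset_Icc_self ht) x₀ (left_mem_Icc.2 hv.le)
    calc ‖(t - x₀)⁻¹‖ = 1 / (t - x₀) := by rw [Real.norm_of_nonneg (by positivity), one_div]
      _ ≤ L / |a t| := by rw [div_le_div_iff₀ hpos (abs_pos.2 (hne t ht))]; linarith
      _ = L * ‖1 / a t‖ := by rw [norm_div, norm_one, Real.norm_eq_abs, mul_one_div]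
  rw [← intervalIntegrable_iff_integrableOn_Ioo_of_le hv.le,
    intervalIntegrable_sub_inv_iff] at hinv
  exact hinv.elim hv.ne fun h => h left_mem_uIcc

/-- Lemma 2.1(3): if `a ∈ W^{1,∞}(0,1)` vanishes only at the interior point `x₀` and
`(x-x₀)a' ≤ K₁ a` a.e. with `K₁ ∈ [1,2)`, then `1/√a ∈ L¹(0,1)` but `1/a ∉ L¹(0,1)`. -/
theorem stmt_3 (x₀ K₁ : ℝ) (hx₀ : x₀ ∈ Ioo (0:ℝ) 1) (hK₁ : K₁ ∈ Ico (1:ℝ) 2)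
    (a a' : ℝ → ℝ) (L : NNReal)
    (ha_lip : LipschitzOnWith L a (Icc 0 1))
    (ha_deriv : ∀ᵐ x ∂(volume.restrict (Ioo (0:ℝ) 1)), HasDerivAt a (a' x) x)
    (ha_zero : a x₀ = 0)
    (ha_pos : ∀ x ∈ Icc (0:ℝ) 1, x ≠ x₀ → 0 < a x)
    (hdeg : ∀ᵐ x ∂(volume.restrict (Ioo (0:ℝ) 1)), (x - x₀) * a' x ≤ K₁ * a x) :
    IntegrableOn (fun x => 1 / Real.sqrt (a x)) (Ioo (0:ℝ) 1) ∧
    ¬ IntegrableOn (fun x => 1 / a x) (Ioo (0:ℝ) 1) := by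
  obtain ⟨hx₀0, hx₀1⟩ := hx₀
  have hac : AbsolutelyContinuousOnInterval a 0 1 :=
    (uIcc_of_le (zero_le_one' ℝ) ▸ ha_lip).absolutelyContinuousOnInterval
  obtain ⟨c, hc, hle⟩ := exists_pos_mul_abs_sub_rpow_le ⟨hx₀0, hx₀1⟩ hac ha_deriv hdeg
    (ha_pos 0 (left_mem_Icc.2 zero_le_one) hx₀0.ne)
    (ha_pos 1 (right_mem_Icc.2 zero_le_one) hx₀1.ne')
  refine ⟨integrableOn_one_div_sqrt_of_mul_abs_sub_rpow_le hc hK₁.2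
    ((ha_lip.continuousOn.mono Ioo_subset_Icc_self).aestronglyMeasurable measurableSet_Ioo)
    (fun t ht => hle t (Ioo_subset_Icc_self ht)), fun h => ?_⟩
  exact not_integrableOn_one_div_of_lipschitzOnWith hx₀1
    (ha_lip.mono (Icc_subset_Icc hx₀0.le le_rfl)) ha_zero
    (fun t ht => (ha_pos t ⟨(hx₀0.trans ht.1).le, ht.2.le⟩ ht.1.ne').ne')
    (h.mono_set (Ioo_subset_Ioo hx₀0.le le_rfl))
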